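/- arXiv:0912.0820 — 4 statements merged into one kernel-verified Lean document; each statement's English description precedes it below -/
import Mathlib

section
/- Let (α_i), (β_i) be nonincreasing summable sequences of nonnegative reals with ∑α_i + ∑β_i ≤ 1. Suppose ∑ α_i^3 + ∑ β_i^3 = (∑ α_i^2 - ∑ β_i^2)^2. Then one of the following holds: (a) there exists n ≥ 1 with α_i = 1/n for i ≤ n and α_i = 0 for i > n, and β ≡ 0; (b) there exists n ≥ 1 with β_i = 1/n for i ≤ n and β_i = 0 for i > n, and α ≡ 0; or (c) α ≡ 0 and β ≡ 0. -/
open Filter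

private lemma sumSq {α : ℕ → ℝ} (h0 : ∀ i, 0 ≤ α i) (hanti : Antitone α)
    (hs : Summable α) : Summable (fun i => α i ^ 2) := by
  refine Summable.of_nonneg_of_le (fun i => sq_nonneg _) (fun i => ?_) (hs.mul_left (α 0))
  have hle : α i ≤ α 0 := hanti (Nat.zero_le i)
  calc α i ^ 2 = α i * α i := sq (α i) ▸ (sq (α i)).symm ▸ (pow_two (α i))
    _ ≤ α 0 * α i := mul_le_mul_of_nonneg_right hle (h0 i)

private lemma sumCube {α : ℕ → ℝ} (h0 : ∀ i, 0 ≤ α i) (hanti : Antitone α)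
    (hs : Summable α) : Summable (fun i => α i ^ 3) := by
  refine Summable.of_nonneg_of_le (fun i => pow_nonneg (h0 i) 3) (fun i => ?_)
    ((sumSq h0 hanti hs).mul_left (α 0))
  have hle : α i ≤ α 0 := hanti (Nat.zero_le i)
  have : α i ^ 3 = α i * α i ^ 2 := by ring
  rw [this]
  exact mul_le_mul_of_nonneg_right hle (sq_nonneg _)

private lemma sumT {α : ℕ → ℝ} (h0 : ∀ i, 0 ≤ α i) (hanti : Antitone α)
    (hs : Summable α) (c : ℝ) : Summable (fun i => α i * (α i - c) ^ 2) := by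
  have expand : (fun i => α i * (α i - c) ^ 2)
      = fun i => (α i ^ 3 - 2 * c * α i ^ 2) + c ^ 2 * α i := by
    funext i; ring
  rw [expand]
  exact (((sumCube h0 hanti hs).sub ((sumSq h0 hanti hs).mul_left _)).add (hs.mul_left _))

private lemma tsumT {α : ℕ → ℝ} (h0 : ∀ i, 0 ≤ α i) (hanti : Antitone α)
    (hs : Summable α) (c : ℝ) :
    ∑' i, α i * (α i - c) ^ 2
      = (∑' i, α i ^ 3) - 2 * c * (∑' i, α i ^ 2) + c ^ 2 * (∑' i, α i) := by
  have expand : (fun i => α i * (α i - c) ^ 2)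
      = fun i => (α i ^ 3 - 2 * c * α i ^ 2) + c ^ 2 * α i := by
    funext i; ring
  rw [expand, Summable.tsum_add (((sumCube h0 hanti hs)).sub ((sumSq h0 hanti hs).mul_left _))
    (hs.mul_left _), Summable.tsum_sub (sumCube h0 hanti hs) ((sumSq h0 hanti hs).mul_left _),
    tsum_mul_left, tsum_mul_left]

private lemma structureLemma {α : ℕ → ℝ} (h0 : ∀ i, 0 ≤ α i) (hanti : Antitone α)
    (hs : Summable α) {c : ℝ} (hc : 0 < c)
    (hmem : ∀ i, α i = 0 ∨ α i = c) (h1 : ∑' i, α i = 1) :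
    ∃ n : ℕ, 1 ≤ n ∧ (∀ i, i < n → α i = 1 / (n : ℝ)) ∧ (∀ i, n ≤ i → α i = 0) := by
  classical
  have htend : Tendsto α atTop (nhds 0) := hs.tendsto_atTop_zero
  have hex : ∃ i, α i = 0 := by
    obtain ⟨i, hi⟩ := (htend.eventually (gt_mem_nhds hc)).exists
    exact ⟨i, (hmem i).resolve_right (fun h => absurd hi (by rw [h]; exact lt_irrefl _))⟩
  set n := Nat.find hex with hn
  have hzero : ∀ i, n ≤ i → α i = 0 := fun i hi =>
    le_antisymm (by calc α i ≤ α n := hanti hi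
                      _ = 0 := Nat.find_spec hex) (h0 i)
  have hcval : ∀ i, i < n → α i = c := fun i hi =>
    (hmem i).resolve_left (Nat.find_min hex hi)
  have hts : (∑' i, α i) = ∑ i ∈ Finset.range n, α i :=
    tsum_eq_sum (fun i hi => hzero i (by simpa using Finset.mem_range.not.mp hi))
  have hnc : (n : ℝ) * c = 1 := by
    rw [hts] at h1
    rw [Finset.sum_congr rfl (fun i hi => hcval i (Finset.mem_range.mp hi))] at h1
    simpa [mul_comm] using h1
  have hn1 : 1 ≤ n := by
    rcases Nat.eq_zero_or_pos n with h | h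
    · exfalso; rw [h] at hnc; norm_num at hnc
    · exact h
  have hnpos : (0 : ℝ) < n := by exact_mod_cast hn1
  refine ⟨n, hn1, fun i hi => ?_, hzero⟩
  rw [hcval i hi]
  field_simp
  linarith [hnc]

theorem stmt_3 (α β : ℕ → ℝ)
    (hα0 : ∀ i, 0 ≤ α i) (hβ0 : ∀ i, 0 ≤ β i)
    (hαanti : Antitone α) (hβanti : Antitone β)
    (hsα : Summable α) (hsβ : Summable β)
    (hsum : (∑' i, α i) + (∑' i, β i) ≤ 1)
    (heq : (∑' i, (α i) ^ 3) + (∑' i, (β i) ^ 3)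
      = ((∑' i, (α i) ^ 2) - (∑' i, (β i) ^ 2)) ^ 2) :
    (∃ n : ℕ, 1 ≤ n ∧ (∀ i, i < n → α i = 1 / n) ∧ (∀ i, n ≤ i → α i = 0) ∧ ∀ i, β i = 0) ∨
    (∃ n : ℕ, 1 ≤ n ∧ (∀ i, i < n → β i = 1 / n) ∧ (∀ i, n ≤ i → β i = 0) ∧ ∀ i, α i = 0) ∨
    ((∀ i, α i = 0) ∧ ∀ i, β i = 0) := by
  set a1 := ∑' i, α i with ha1
  set b1 := ∑' i, β i with hb1
  set a2 := ∑' i, α i ^ 2 with ha2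
  set b2 := ∑' i, β i ^ 2 with hb2
  have hsα2 := sumSq hα0 hαanti hsα
  have hsβ2 := sumSq hβ0 hβanti hsβ
  have ha1nn : 0 ≤ a1 := tsum_nonneg hα0
  have hb1nn : 0 ≤ b1 := tsum_nonneg hβ0
  have ha2nn : 0 ≤ a2 := tsum_nonneg (fun i => sq_nonneg _)
  have hb2nn : 0 ≤ b2 := tsum_nonneg (fun i => sq_nonneg _)
  have hTas : Summable (fun i => α i * (α i - a2) ^ 2) := sumT hα0 hαanti hsα a2
  have hTbs : Summable (fun i => β i * (β i - b2) ^ 2) := sumT hβ0 hβanti hsβ b2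
  have hTa := tsumT hα0 hαanti hsα a2
  have hTb := tsumT hβ0 hβanti hsβ b2
  have hTann : 0 ≤ ∑' i, α i * (α i - a2) ^ 2 :=
    tsum_nonneg (fun i => mul_nonneg (hα0 i) (sq_nonneg _))
  have hTbnn : 0 ≤ ∑' i, β i * (β i - b2) ^ 2 :=
    tsum_nonneg (fun i => mul_nonneg (hβ0 i) (sq_nonneg _))
  -- key vanishing
  have key : (∑' i, α i * (α i - a2) ^ 2) + (∑' i, β i * (β i - b2) ^ 2)
      + 2 * a2 * b2 + a2 ^ 2 * (1 - a1) + b2 ^ 2 * (1 - b1) = 0 := by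
    rw [hTa, hTb]; nlinarith [heq]
  have h1a : 0 ≤ 1 - a1 := by linarith
  have h1b : 0 ≤ 1 - b1 := by linarith
  have aux1 : 0 ≤ a2 * b2 := mul_nonneg ha2nn hb2nn
  have aux2 : 0 ≤ a2 ^ 2 * (1 - a1) := mul_nonneg (sq_nonneg a2) h1a
  have aux3 : 0 ≤ b2 ^ 2 * (1 - b1) := mul_nonneg (sq_nonneg b2) h1b
  have hab : a2 * b2 = 0 := by linarith
  have hTa0 : ∑' i, α i * (α i - a2) ^ 2 = 0 := by linarith
  have hTb0 : ∑' i, β i * (β i - b2) ^ 2 = 0 := by linarith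
  have ha1eq : a2 ^ 2 * (1 - a1) = 0 := by linarith
  have hb1eq : b2 ^ 2 * (1 - b1) = 0 := by linarith
  -- a2 = 0 forces α ≡ 0
  have hvanish : ∀ (γ : ℕ → ℝ), (∀ i, 0 ≤ γ i) → Summable (fun i => γ i ^ 2) →
      (∑' i, γ i ^ 2) = 0 → ∀ i, γ i = 0 := by
    intro γ h0 hs2 hz i
    have hle : γ i ^ 2 ≤ ∑' j, γ j ^ 2 := Summable.le_tsum hs2 i (fun j _ => sq_nonneg _)
    have : γ i ^ 2 = 0 := le_antisymm (hz ▸ hle) (sq_nonneg _)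
    exact pow_eq_zero_iff (by norm_num) |>.mp this
  -- membership from T = 0
  have hmemgen : ∀ (γ : ℕ → ℝ) (c : ℝ), (∀ i, 0 ≤ γ i) → Antitone γ → Summable γ →
      (∑' i, γ i * (γ i - c) ^ 2) = 0 → ∀ i, γ i = 0 ∨ γ i = c := by
    intro γ c h0 hanti hs hz i
    have hle : γ i * (γ i - c) ^ 2 ≤ ∑' j, γ j * (γ j - c) ^ 2 :=
      Summable.le_tsum (sumT h0 hanti hs c) i (fun j _ => mul_nonneg (h0 j) (sq_nonneg _))
    have h0' : γ i * (γ i - c) ^ 2 = 0 :=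
      le_antisymm (hz ▸ hle) (mul_nonneg (h0 i) (sq_nonneg _))
    rcases mul_eq_zero.mp h0' with h | h
    · exact Or.inl h
    · right; have := pow_eq_zero_iff (n := 2) (by norm_num) |>.mp h; linarith
  rcases mul_eq_zero.mp hab with hA | hB
  · -- a2 = 0 : α ≡ 0
    have hαz : ∀ i, α i = 0 := hvanish α hα0 hsα2 hA
    rcases eq_or_lt_of_le hb2nn with hB | hB
    · exact Or.inr (Or.inr ⟨hαz, hvanish β hβ0 hsβ2 hB.symm⟩)
    · have hb1' : b1 = 1 := by
        have : b2 ^ 2 ≠ 0 := pow_ne_zero _ (ne_of_gt hB)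
        have := (mul_eq_zero.mp hb1eq).resolve_left this
        linarith
      have hmem := hmemgen β b2 hβ0 hβanti hsβ hTb0
      obtain ⟨n, hn1, hval, hz⟩ := structureLemma hβ0 hβanti hsβ hB hmem hb1'
      exact Or.inr (Or.inl ⟨n, hn1, hval, hz, hαz⟩)
  · -- b2 = 0 : β ≡ 0
    have hβz : ∀ i, β i = 0 := hvanish β hβ0 hsβ2 hB
    rcases eq_or_lt_of_le ha2nn with hA | hA
    · exact Or.inr (Or.inr ⟨hvanish α hα0 hsα2 hA.symm, hβz⟩)
    · have ha1' : a1 = 1 := by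
        have : a2 ^ 2 ≠ 0 := pow_ne_zero _ (ne_of_gt hA)
        have := (mul_eq_zero.mp ha1eq).resolve_left this
        linarith
      have hmem := hmemgen α a2 hα0 hαanti hsα hTa0
      obtain ⟨n, hn1, hval, hz⟩ := structureLemma hα0 hαanti hsα hA hmem ha1'
      exact Or.inl ⟨n, hn1, hval, hz, hβz⟩
end

section
/- For any real number R > 0, the sequence a_k = R^{k(k+1)/2} · (∏_{j=1}^{k} j!) / (k(k+1)/2)! tends to 0 as k → ∞. -/
open Filter Nat

theorem stmt_4 (R : ℝ) (hR : 0 < R) :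
    Filter.Tendsto
      (fun k : ℕ => R ^ (k * (k + 1) / 2) * (∏ j ∈ Finset.Icc 1 k, (Nat.factorial j : ℝ))
        / (Nat.factorial (k * (k + 1) / 2) : ℝ))
      Filter.atTop (nhds 0) := by
  set a : ℕ → ℝ := fun k : ℕ => R ^ (k * (k + 1) / 2) *
      (∏ j ∈ Finset.Icc 1 k, (Nat.factorial j : ℝ))
        / (Nat.factorial (k * (k + 1) / 2) : ℝ) with haa
  show Filter.Tendsto a Filter.atTop (nhds 0)
  have hTsucc : ∀ k : ℕ, (k+1) * (k+1+1) / 2 = k * (k+1) / 2 + (k+1) := by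
    intro k
    have : (k+1) * (k+1+1) = k * (k+1) + (k+1) * 2 := by ring
    rw [this, Nat.add_mul_div_right _ _ (by norm_num : (0:ℕ) < 2)]
  have hPpos : ∀ k : ℕ, 0 < ∏ j ∈ Finset.Icc 1 k, (Nat.factorial j : ℝ) := by
    intro k
    apply Finset.prod_pos
    intro j _
    exact_mod_cast Nat.factorial_pos j
  have hanonneg : ∀ k, 0 ≤ a k := by
    intro k
    apply div_nonneg (mul_nonneg (by positivity) (hPpos k).le)
    exact_mod_cast (Nat.factorial_pos _).le
  obtain ⟨N, hN⟩ : ∃ N : ℕ, 4 * R ≤ N := ⟨⌈4*R⌉₊, Nat.le_ceil _⟩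
  have hstep : ∀ k, N ≤ k → a (k+1) ≤ (1/2) * a k := by
    intro k hk
    set t : ℕ := k * (k+1) / 2 with ht
    have htfac : (0:ℝ) < (Nat.factorial t : ℝ) := by exact_mod_cast Nat.factorial_pos t
    have htkfac : (0:ℝ) < (Nat.factorial (t + (k+1)) : ℝ) := by
      exact_mod_cast Nat.factorial_pos _
    have hkey : a (k+1) = a k *
        (R ^ (k+1) * ((k+1).factorial : ℝ) * (t.factorial : ℝ) /
          ((t + (k+1)).factorial : ℝ)) := by
      have hprod : (∏ j ∈ Finset.Icc 1 (k+1), (Nat.factorial j : ℝ)) =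
          (∏ j ∈ Finset.Icc 1 k, (Nat.factorial j : ℝ)) * ((k+1).factorial : ℝ) :=
        Finset.prod_Icc_succ_top (Nat.succ_le_succ (Nat.zero_le k)) _
      simp only [haa, hTsucc k, ← ht, hprod, pow_add]
      field_simp
    have hratio : R ^ (k+1) * ((k+1).factorial : ℝ) * (t.factorial : ℝ) /
          ((t + (k+1)).factorial : ℝ) ≤ 1/2 := by
      have h1 : (t.factorial : ℝ) * ((t:ℝ)+1) ^ (k+1) ≤ ((t + (k+1)).factorial : ℝ) := by
        exact_mod_cast Nat.factorial_mul_pow_le_factorial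
      have h2 : ((k+1).factorial : ℝ) ≤ ((k:ℝ)+1) ^ (k+1) := by
        exact_mod_cast Nat.factorial_le_pow (k+1)
      have ht2 : ((t:ℝ)) * 2 = (k:ℝ) * ((k:ℝ)+1) := by
        have := Nat.div_mul_cancel (Nat.even_mul_succ_self k).two_dvd
        exact_mod_cast this
      have hkR : 4 * R ≤ (k:ℝ) := le_trans hN (by exact_mod_cast hk)
      have h3 : R * ((k:ℝ)+1) ≤ (1/2) * ((t:ℝ)+1) := by nlinarith
      have htp : (0:ℝ) < (t:ℝ) + 1 := by positivity
      calc R ^ (k+1) * ((k+1).factorial : ℝ) * (t.factorial : ℝ) /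
          ((t + (k+1)).factorial : ℝ)
          ≤ R ^ (k+1) * ((k:ℝ)+1) ^ (k+1) / ((t:ℝ)+1) ^ (k+1) := by
            rw [div_le_div_iff₀ htkfac (by positivity)]
            calc R ^ (k+1) * ((k+1).factorial : ℝ) * (t.factorial : ℝ) * ((t:ℝ)+1)^(k+1)
                ≤ R ^ (k+1) * ((k:ℝ)+1) ^ (k+1) * ((t.factorial : ℝ) * ((t:ℝ)+1)^(k+1)) := by
                  have := mul_le_mul_of_nonneg_left h2 (le_of_lt (pow_pos hR (k+1)))
                  nlinarith [pow_pos hR (k+1), pow_pos htp (k+1), htfac,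
                    mul_le_mul_of_nonneg_right this (mul_nonneg htfac.le (pow_pos htp (k+1)).le)]
              _ ≤ R ^ (k+1) * ((k:ℝ)+1) ^ (k+1) * ((t + (k+1)).factorial : ℝ) := by
                  apply mul_le_mul_of_nonneg_left h1
                  positivity
        _ = (R * ((k:ℝ)+1) / ((t:ℝ)+1)) ^ (k+1) := by
            rw [div_pow, mul_pow]
        _ ≤ (1/2 : ℝ) ^ (k+1) := by
            apply pow_le_pow_left₀ (by positivity)
            rw [div_le_iff₀ htp]
            linarith
        _ ≤ 1/2 := by
            calc (1/2 : ℝ) ^ (k+1) ≤ (1/2:ℝ)^1 :=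
                pow_le_pow_of_le_one (by norm_num) (by norm_num) (Nat.le_add_left 1 k)
              _ = 1/2 := pow_one _
    calc a (k+1) = a k * _ := hkey
      _ ≤ a k * (1/2) := mul_le_mul_of_nonneg_left hratio (hanonneg k)
      _ = (1/2) * a k := mul_comm _ _
  have hgeo : ∀ m, a (N + m) ≤ a N * (1/2)^m := by
    intro m
    induction m with
    | zero => simp
    | succ m ih =>
      have : a (N + (m+1)) = a ((N+m)+1) := by ring_nf
      rw [this]
      calc a ((N+m)+1) ≤ (1/2) * a (N+m) := hstep _ (Nat.le_add_right N m)
        _ ≤ (1/2) * (a N * (1/2)^m) := by linarith [ih]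
        _ = a N * (1/2)^(m+1) := by ring
  have hshift : Filter.Tendsto (fun m => a (N + m)) Filter.atTop (nhds 0) := by
    apply squeeze_zero (fun m => hanonneg _) hgeo
    have := (tendsto_pow_atTop_nhds_zero_of_lt_one (by norm_num : (0:ℝ) ≤ 1/2)
      (by norm_num : (1/2:ℝ) < 1)).const_mul (a N)
    simpa using this
  have : (fun m => a (N + m)) = fun m => a (m + N) := by
    funext m; rw [Nat.add_comm]
  rw [this] at hshift
  exact (Filter.tendsto_add_atTop_iff_nat N).mp hshift
end

section
/- For every ε > 0 there exists k ≥ 1 such that, with n = k(k+1)/2, the ratio (∏_{j=1}^{k-1}(2j+1)^{k-j}) / n! < ε^n. Equivalently, the inverse dimension of the staircase irreducible representation of S_n is eventually smaller than ε^n. -/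
open Finset

private lemma sum_aux9 (m : ℕ) : (∑ j ∈ Finset.Icc 1 m, (m + 1 - j)) * 2 = m * (m + 1) := by
  induction m with
  | zero => simp
  | succ m ih =>
    rw [Finset.sum_Icc_succ_top (by omega : 1 ≤ m + 1)]
    have h1 : ∀ j ∈ Finset.Icc 1 m, m + 1 + 1 - j = (m + 1 - j) + 1 := by
      intro j hj
      have := Finset.mem_Icc.mp hj
      omega
    rw [Finset.sum_congr rfl h1, Finset.sum_add_distrib, Finset.sum_const, Nat.card_Icc]
    have e : (m + 1) * (m + 1 + 1) = m * (m + 1) + 2 * (m + 1) := by ring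
    simp only [smul_eq_mul, mul_one]
    omega

private lemma fact_lb9 : ∀ n : ℕ, (n : ℝ) ^ n ≤ 4 ^ n * (Nat.factorial n : ℝ) := by
  intro n
  induction n with
  | zero => simp
  | succ n ih =>
    have key : ((n : ℝ) + 1) ^ n ≤ 4 * (n : ℝ) ^ n := by
      rcases Nat.eq_zero_or_pos n with h | h
      · subst h; norm_num
      · have hn0 : (0 : ℝ) < n := by exact_mod_cast h
        have h1 : ((n : ℝ) + 1) = n * (1 + 1 / n) := by field_simp
        have h2 : (1 + 1 / (n : ℝ)) ^ n ≤ Real.exp (1 / n) ^ n := by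
          apply pow_le_pow_left₀ (by positivity)
          have := Real.add_one_le_exp (1 / (n : ℝ))
          linarith
        have h3 : Real.exp (1 / (n : ℝ)) ^ n = Real.exp 1 := by
          rw [← Real.exp_nat_mul]
          congr 1
          field_simp
        have h4 : Real.exp 1 ≤ 4 := by
          have := Real.exp_one_lt_d9
          linarith
        calc ((n : ℝ) + 1) ^ n = (n : ℝ) ^ n * (1 + 1 / n) ^ n := by
              rw [h1, mul_pow]
          _ ≤ (n : ℝ) ^ n * 4 := by
              have hp : (0 : ℝ) ≤ (n : ℝ) ^ n := by positivity
              have : (1 + 1 / (n : ℝ)) ^ n ≤ 4 := by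
                calc (1 + 1 / (n : ℝ)) ^ n ≤ Real.exp (1 / n) ^ n := h2
                  _ = Real.exp 1 := h3
                  _ ≤ 4 := h4
              nlinarith
          _ = 4 * (n : ℝ) ^ n := by ring
    have hfp : (0 : ℝ) ≤ (Nat.factorial n : ℝ) := by positivity
    calc ((n + 1 : ℕ) : ℝ) ^ (n + 1) = ((n : ℝ) + 1) ^ n * ((n : ℝ) + 1) := by
          push_cast; ring
      _ ≤ (4 * (n : ℝ) ^ n) * ((n : ℝ) + 1) := by
          have : (0 : ℝ) ≤ (n : ℝ) + 1 := by positivity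
          nlinarith [pow_nonneg (Nat.cast_nonneg (α := ℝ) n) n]
      _ ≤ (4 * (4 ^ n * (Nat.factorial n : ℝ))) * ((n : ℝ) + 1) := by
          have : (0 : ℝ) ≤ (n : ℝ) + 1 := by positivity
          nlinarith
      _ = 4 ^ (n + 1) * (Nat.factorial (n + 1) : ℝ) := by
          rw [Nat.factorial_succ]
          push_cast
          ring

theorem stmt_9 (ε : ℝ) (hε : 0 < ε) :
    ∃ k : ℕ, 1 ≤ k ∧
      ((∏ j ∈ Finset.Icc 1 (k - 1), ((2 * j + 1 : ℕ) : ℝ) ^ (k - j))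
          / (Nat.factorial (k * (k + 1) / 2) : ℝ))
        < ε ^ (k * (k + 1) / 2) := by
  set k : ℕ := ⌈(16 : ℝ) / ε⌉₊ + 1 with hkdef
  have hk1 : 1 ≤ k := by omega
  refine ⟨k, hk1, ?_⟩
  set n : ℕ := k * (k + 1) / 2 with hndef
  -- 2 * n = k * (k + 1)
  have h2 : 2 * n = k * (k + 1) := by
    obtain ⟨r, hr⟩ := Nat.even_mul_succ_self k
    omega
  have hn1 : 1 ≤ n := by
    have : 1 * 2 ≤ k * (k + 1) := Nat.mul_le_mul hk1 (by omega)
    omega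
  -- exponent sum
  have hg := sum_aux9 (k - 1)
  rw [show k - 1 + 1 = k from by omega] at hg
  have hs : (∑ j ∈ Finset.Icc 1 (k - 1), (k - j)) ≤ n := by
    have hle : (k - 1) * k ≤ k * (k + 1) := Nat.mul_le_mul (by omega) (by omega)
    omega
  -- step A in ℕ
  have hA : (∏ j ∈ Finset.Icc 1 (k - 1), (2 * j + 1) ^ (k - j)) ≤ (2 * k) ^ n := by
    calc (∏ j ∈ Finset.Icc 1 (k - 1), (2 * j + 1) ^ (k - j))
        ≤ ∏ j ∈ Finset.Icc 1 (k - 1), (2 * k) ^ (k - j) := by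
          apply Finset.prod_le_prod'
          intro j hj
          have := Finset.mem_Icc.mp hj
          exact Nat.pow_le_pow_left (by omega) _
      _ = (2 * k) ^ (∑ j ∈ Finset.Icc 1 (k - 1), (k - j)) :=
          Finset.prod_pow_eq_pow_sum _ _ _
      _ ≤ (2 * k) ^ n := Nat.pow_le_pow_right (by omega) hs
  -- 16 / ε < k
  have hkε : (16 : ℝ) / ε < k := by
    have h := Nat.le_ceil ((16 : ℝ) / ε)
    have : ((⌈(16 : ℝ) / ε⌉₊ : ℝ) + 1) = (k : ℝ) := by
      rw [hkdef]; push_cast; ring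
    linarith
  have h16 : (16 : ℝ) < ε * k := by
    rw [div_lt_iff₀ hε] at hkε
    linarith [mul_comm (k : ℝ) ε]
  have h2c : 2 * (n : ℝ) = (k : ℝ) * ((k : ℝ) + 1) := by
    have h := congrArg (fun m : ℕ => (m : ℝ)) h2
    simp only [hkdef] at h ⊢
    push_cast at h ⊢
    linarith
  have hk0 : (0 : ℝ) < (k : ℝ) + 1 := by positivity
  have hεn : 8 * (k : ℝ) < ε * n := by
    have hmul : 16 * ((k : ℝ) + 1) < (ε * k) * ((k : ℝ) + 1) :=
      mul_lt_mul_of_pos_right h16 hk0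
    have heq : (ε * k) * ((k : ℝ) + 1) = ε * (2 * (n : ℝ)) := by
      rw [h2c]; ring
    have hkr : (1 : ℝ) ≤ (k : ℝ) := by exact_mod_cast hk1
    nlinarith
  -- final computation
  have hfp : (0 : ℝ) < (Nat.factorial n : ℝ) := by
    exact_mod_cast Nat.factorial_pos n
  rw [div_lt_iff₀ hfp]
  have hcast : (∏ j ∈ Finset.Icc 1 (k - 1), ((2 * j + 1 : ℕ) : ℝ) ^ (k - j))
      = ((∏ j ∈ Finset.Icc 1 (k - 1), (2 * j + 1) ^ (k - j) : ℕ) : ℝ) := by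
    push_cast
    rfl
  have h4pos : (0 : ℝ) < 4 ^ n := by positivity
  have key : (2 * (k : ℝ)) ^ n * 4 ^ n < ε ^ n * (Nat.factorial n : ℝ) * 4 ^ n := by
    calc (2 * (k : ℝ)) ^ n * 4 ^ n = (8 * (k : ℝ)) ^ n := by
          rw [← mul_pow]; ring_nf
      _ < (ε * n) ^ n := by
          apply pow_lt_pow_left₀ hεn (by positivity)
          omega
      _ = ε ^ n * (n : ℝ) ^ n := mul_pow _ _ _
      _ ≤ ε ^ n * (4 ^ n * (Nat.factorial n : ℝ)) :=
          mul_le_mul_of_nonneg_left (fact_lb9 n) (by positivity)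
      _ = ε ^ n * (Nat.factorial n : ℝ) * 4 ^ n := by ring
  have key2 : (2 * (k : ℝ)) ^ n < ε ^ n * (Nat.factorial n : ℝ) :=
    lt_of_mul_lt_mul_right key h4pos.le
  calc (∏ j ∈ Finset.Icc 1 (k - 1), ((2 * j + 1 : ℕ) : ℝ) ^ (k - j))
      = ((∏ j ∈ Finset.Icc 1 (k - 1), (2 * j + 1) ^ (k - j) : ℕ) : ℝ) := hcast
    _ ≤ (((2 * k) ^ n : ℕ) : ℝ) := by exact_mod_cast hA
    _ = (2 * (k : ℝ)) ^ n := by push_cast; ring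
    _ < ε ^ n * (Nat.factorial n : ℝ) := key2
end

section
/- Let s ∈ S_n and suppose x ∈ X^n is constant on each orbit of s, with value x_q on orbit ω_q. Then the sign τ(s,x) = (-1)^{#inversions of s among negative positions} equals ∏_{q : x_q < 0} (-1)^{#ω_q - 1}. -/
/-!
The set of negative positions is `s`-invariant, so `s` restricts to a permutation of it. That set
is a finite linear order whose inversions under the restriction are exactly the pairs counted on
the left, so the left side is the sign of the restriction. Each cycle of `s` lies either inside or
outside an `s`-invariant set, hence the restriction is the product of the cycles lying inside, and
a cycle of length `ℓ` has sign `(-1) ^ (ℓ - 1)`.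
-/

open Finset

namespace Equiv.Perm

variable {α : Type*}

theorem sign_fin_eq_neg_one_pow_card_inversions {n : ℕ} (σ : Perm (Fin n)) :
    (sign σ : ℤ) = (-1) ^ #{q : Fin n × Fin n | q.1 < q.2 ∧ σ q.2 < σ q.1} := by
  have hpairs : ∏ i, ∏ j ∈ Ioi i, (if σ i < σ j then (1 : ℤˣ) else -1)
      = ∏ q : Fin n × Fin n with q.1 < q.2, (if σ q.1 < σ q.2 then 1 else -1) := by
    rw [prod_filter, Fintype.prod_prod_type]
    refine prod_congr rfl fun i _ => ?_
    rw [← filter_lt_eq_Ioi, prod_filter]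
  suffices sign σ = (-1) ^ #{q : Fin n × Fin n | q.1 < q.2 ∧ σ q.2 < σ q.1} by
    simp [this]
  rw [sign_eq_prod_prod_Ioi, hpairs, prod_ite, prod_const_one, one_mul, prod_const, filter_filter]
  congr 2
  exact filter_congr fun q _ => and_congr_right fun hq =>
    not_lt.trans (σ.injective.ne hq.ne').le_iff_lt

theorem sign_eq_neg_one_pow_card_inversions [Fintype α] [LinearOrder α] (σ : Perm α) :
    (sign σ : ℤ) = (-1) ^ #{q : α × α | q.1 < q.2 ∧ σ q.2 < σ q.1} := by
  let e : α ≃o Fin (Fintype.card α) := (monoEquivOfFin α rfl).symm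
  have hcard : #{q : α × α | q.1 < q.2 ∧ σ q.2 < σ q.1}
      = #{q : Fin _ × Fin _ |
          q.1 < q.2 ∧ e.toEquiv.permCongr σ q.2 < e.toEquiv.permCongr σ q.1} := by
    rw [← Fintype.card_subtype, ← Fintype.card_subtype]
    exact Fintype.card_congr ((e.toEquiv.prodCongr e.toEquiv).subtypeEquiv fun q => by simp)
  rw [hcard, ← sign_fin_eq_neg_one_pow_card_inversions, sign_permCongr]

variable {p : α → Prop}

theorem card_inversions_subtypePerm [Fintype α] [LinearOrder α] [DecidablePred p]
    (σ : Perm α) (h : ∀ x, p (σ x) ↔ p x) :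
    #{q : α × α | q.1 < q.2 ∧ p q.1 ∧ p q.2 ∧ σ q.2 < σ q.1}
      = #{q : Subtype p × Subtype p | q.1 < q.2 ∧ σ.subtypePerm h q.2 < σ.subtypePerm h q.1} := by
  rw [← Fintype.card_subtype, ← Fintype.card_subtype]
  exact Fintype.card_congr
    { toFun := fun q => ⟨(⟨q.1.1, q.2.2.1⟩, ⟨q.1.2, q.2.2.2.1⟩), q.2.1, q.2.2.2.2⟩
      invFun := fun q => ⟨(q.1.1, q.1.2), q.2.1, q.1.1.2, q.1.2.2, q.2.2⟩ }

theorem SameCycle.invariant_iff {f : Perm α} (h : ∀ x, p (f x) ↔ p x) {x y : α}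
    (hxy : f.SameCycle x y) : p x ↔ p y := by
  suffices ∀ {x y}, f.SameCycle x y → p x → p y from ⟨this hxy, this hxy.symm⟩
  rintro x _ ⟨k, rfl⟩ hx
  simpa [subtypePerm_zpow] using ((f.subtypePerm h ^ k) ⟨x, hx⟩).2

theorem Disjoint.invariant_left {σ τ : Perm α} (hd : σ.Disjoint τ)
    (h : ∀ x, p ((σ * τ) x) ↔ p x) (x : α) : p (σ x) ↔ p x := by
  rcases hd x with hx | hx
  · rw [hx]
  · rw [← h x, mul_apply, hx]

variable [Fintype α] [DecidableEq α] [DecidablePred p]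

theorem IsCycle.sign_subtypePerm {c : Perm α} (hc : c.IsCycle) (h : ∀ x, p (c x) ↔ p x) :
    (Perm.sign (c.subtypePerm h) : ℤ)
      = if ∀ i ∈ c.support, p i then (-1) ^ (#c.support - 1) else 1 := by
  split_ifs with hall
  · obtain ⟨k, hk⟩ := Nat.exists_eq_add_of_le' hc.two_le_card_support
    rw [Perm.sign_subtypePerm c h fun a ha => hall a (mem_support.2 ha), hc.sign, hk]
    simp [pow_succ]
  · push Not at hall
    obtain ⟨i, hi, hpi⟩ := hall
    suffices c.subtypePerm h = 1 by simp [this]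
    ext ⟨j, hj⟩
    by_contra hne
    exact hpi ((hc.sameCycle (mem_support.1 hi) hne).invariant_iff h |>.2 hj)

theorem sign_subtypePerm_eq_prod_cycleFactorsFinset (σ : Perm α) (h : ∀ x, p (σ x) ↔ p x) :
    (sign (σ.subtypePerm h) : ℤ) = ∏ c ∈ σ.cycleFactorsFinset,
      if ∀ i ∈ c.support, p i then (-1) ^ (#c.support - 1) else 1 := by
  induction σ using cycle_induction_on with
  | base_one => rw [subtypePerm_one, map_one, Units.val_one, cycleFactorsFinset_one, prod_empty]
  | base_cycles c hc =>
    rw [hc.cycleFactorsFinset_eq_singleton, prod_singleton, hc.sign_subtypePerm]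
  | induction_disjoint σ τ hd _ ihσ ihτ =>
    have hσ := hd.invariant_left h
    have hτ := hd.symm.invariant_left (hd.commute.eq ▸ h)
    rw [← subtypePerm_mul σ τ hσ hτ, sign_mul, Units.val_mul, ihσ hσ, ihτ hτ,
      hd.cycleFactorsFinset_mul_eq_union, prod_union hd.disjoint_cycleFactorsFinset]

end Equiv.Perm

theorem stmt_19 {X : Type*} (n : ℕ) (neg : X → Bool)
    (s : Equiv.Perm (Fin n)) (x : Fin n → X)
    (hconst : ∀ i, x (s i) = x i) :
    ((-1 : ℤ) ^ (Finset.univ.filter fun p : Fin n × Fin n =>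
        p.1 < p.2 ∧ neg (x p.1) ∧ neg (x p.2) ∧ s p.2 < s p.1).card)
      = ∏ c ∈ s.cycleFactorsFinset,
          (if ∀ i ∈ c.support, neg (x i) then (-1 : ℤ) ^ (c.support.card - 1) else 1) := by
  have h : ∀ i, neg (x (s i)) ↔ neg (x i) := fun i => by rw [hconst]
  rw [s.card_inversions_subtypePerm (p := fun i => neg (x i)) h,
    ← Equiv.Perm.sign_eq_neg_one_pow_card_inversions]
  -- `convert` only reconciles the decidability instances of the `if`
  convert s.sign_subtypePerm_eq_prod_cycleFactorsFinset (p := fun i => neg (x i)) h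
end
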